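/- arXiv:math-ph/0212016 — 7 statements merged into one kernel-verified Lean document; each statement's English description precedes it below -/
import Mathlib

section
/- Let f : ℝ∖{0} → ℝ be a differentiable function satisfying f(−x) = −f(x) and, for all nonzero x, y with x+y nonzero, f(x)f(y) − f(x)f(x+y) − f(y)f(x+y) = 0. Then f(x) = c/x for some constant c (and if normalized, f(x) = 1/x). -/
theorem functional_eq_inv (f : ℝ → ℝ)
    (hodd : ∀ x : ℝ, x ≠ 0 → f (-x) = -f x)
    (hfe : ∀ x y : ℝ, x ≠ 0 → y ≠ 0 → x + y ≠ 0 →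
      f x * f y - f x * f (x + y) - f y * f (x + y) = 0)
    (hdiff : DifferentiableOn ℝ f {x : ℝ | x ≠ 0}) :
    ∃ c : ℝ, ∀ x : ℝ, x ≠ 0 → f x = c / x := by
  have hopen : IsOpen {x : ℝ | x ≠ 0} := isOpen_compl_singleton
  have hcont : ∀ b : ℝ, b ≠ 0 → ContinuousAt f b := fun b hb =>
    (hdiff.differentiableAt (hopen.mem_nhds hb)).continuousAt
  by_cases hz : ∃ a : ℝ, a ≠ 0 ∧ f a = 0
  · obtain ⟨a, ha, hfa⟩ := hz
    -- zeros propagate by halving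
    have hpow : ∀ n : ℕ, f (a / 2 ^ n) = 0 := by
      intro n
      induction n with
      | zero => simpa using hfa
      | succ n ih =>
        have h2 : a / 2 ^ n ≠ 0 := by positivity
        have h3 : a / 2 ^ (n + 1) ≠ 0 := by positivity
        have heq := hfe (a / 2 ^ (n + 1)) (a / 2 ^ (n + 1)) h3 h3 (by
          rw [← two_mul]; positivity)
        have hsum : a / 2 ^ (n + 1) + a / 2 ^ (n + 1) = a / 2 ^ n := by
          ring
        rw [hsum, ih] at heq
        nlinarith [heq]
    refine ⟨0, fun b hb => ?_⟩
    rw [zero_div]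
    by_contra hfb
    -- eventually f (b + a / 2^n) = 0
    have htend : Filter.Tendsto (fun n : ℕ => a / 2 ^ n) Filter.atTop (nhds 0) := by
      have := tendsto_pow_atTop_nhds_zero_of_lt_one (by norm_num : (0:ℝ) ≤ 1/2)
        (by norm_num : (1:ℝ)/2 < 1)
      have h := this.const_mul a
      simpa [div_pow, div_eq_mul_inv, mul_comm] using h
    have htend2 : Filter.Tendsto (fun n : ℕ => b + a / 2 ^ n) Filter.atTop (nhds b) := by
      simpa using (tendsto_const_nhds.add htend)
    have hev : ∀ᶠ n in Filter.atTop, f (b + a / 2 ^ n) = 0 := by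
      have hne : ∀ᶠ n in Filter.atTop, b + a / 2 ^ n ≠ 0 := by
        have : {x : ℝ | x ≠ 0} ∈ nhds b := hopen.mem_nhds hb
        exact htend2.eventually_mem this
      filter_upwards [hne] with n hn
      have h2 : a / 2 ^ n ≠ 0 := by positivity
      have heq := hfe (a / 2 ^ n) b h2 hb (by rwa [add_comm] at hn)
      rw [hpow n] at heq
      have : f b * f (a / 2 ^ n + b) = 0 := by linarith
      rcases mul_eq_zero.1 this with h | h
      · exact absurd h hfb
      · rwa [add_comm] at h
    have hlim : Filter.Tendsto (fun n : ℕ => f (b + a / 2 ^ n)) Filter.atTop (nhds (f b)) :=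
      (hcont b hb).tendsto.comp htend2
    have : f b = 0 :=
      tendsto_nhds_unique hlim (Filter.Tendsto.congr'
        (hev.mono fun n hn => hn.symm) tendsto_const_nhds)
    exact hfb this
  · -- f never vanishes
    push_neg at hz
    have hne : ∀ x : ℝ, x ≠ 0 → f x ≠ 0 := fun x hx => hz x hx
    set g : ℝ → ℝ := fun x => if x = 0 then 0 else (f x)⁻¹ with hg
    have hg0 : g 0 = 0 := by simp [hg]
    have hgx : ∀ x : ℝ, x ≠ 0 → g x = (f x)⁻¹ := fun x hx => by simp [hg, hx]
    have hadd : ∀ x y : ℝ, g (x + y) = g x + g y := by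
      intro x y
      by_cases hx : x = 0
      · simp [hx, hg0]
      by_cases hy : y = 0
      · simp [hy, hg0]
      by_cases hxy : x + y = 0
      · have hyx : y = -x := by linarith
        rw [hxy, hg0, hgx x hx, hgx y hy, hyx, hodd x hx, inv_neg]
        ring
      · have heq := hfe x y hx hy hxy
        rw [hgx _ hxy, hgx x hx, hgx y hy]
        have h1 := hne x hx
        have h2 := hne y hy
        have h3 := hne _ hxy
        field_simp
        nlinarith [heq]
    have hgcont_ne : ∀ b : ℝ, b ≠ 0 → ContinuousAt g b := by
      intro b hb
      have : ContinuousAt (fun x => (f x)⁻¹) b := ((hcont b hb).inv₀ (hne b hb))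
      refine this.congr ?_
      filter_upwards [hopen.mem_nhds hb] with x hx
      exact (hgx x hx).symm
    have hgcont : Continuous g := by
      rw [continuous_iff_continuousAt]
      intro t
      by_cases ht : t = 0
      · subst ht
        have h1 : ContinuousAt (fun x : ℝ => g (x + 1) - g 1) 0 := by
          have ha : Filter.Tendsto (fun x : ℝ => x + 1) (nhds 0) (nhds 1) := by
            simpa using (continuous_add_right (1 : ℝ)).tendsto (0 : ℝ)
          have h2 : ContinuousAt (fun x : ℝ => g (x + 1)) 0 := by
            have := (hgcont_ne 1 one_ne_zero).tendsto.comp ha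
            simpa [ContinuousAt, Function.comp_def] using this
          exact h2.sub continuousAt_const
        refine h1.congr ?_
        filter_upwards with x
        rw [hadd x 1]; ring
      · exact hgcont_ne t ht
    set G : ℝ →+ ℝ := AddMonoidHom.mk' g hadd with hG
    have hlin : ∀ x : ℝ, g x = x * g 1 := by
      intro x
      have := (G.toRealLinearMap hgcont).map_smul x (1 : ℝ)
      simpa [AddMonoidHom.coe_toRealLinearMap, hG, smul_eq_mul] using this
    refine ⟨f 1, fun x hx => ?_⟩
    have h1 : g x = x * (f 1)⁻¹ := by
      rw [hlin x, hgx 1 one_ne_zero]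
    rw [hgx x hx] at h1
    have hf1 := hne 1 one_ne_zero
    have hfx := hne x hx
    field_simp at h1 ⊢
    linarith [h1]
end

section
/- Let N ≥ 3 and let F_i be the third-derivative matrices of F(a_1,...,a_N) = Σ_{i<j} f(a_i−a_j) + (a/6)(Σa_i)³ + (b/2)(Σa_i)(Σa_j²) + (c/6)Σa_i³ with f'''(x)=coth(x), at a point with pairwise distinct coordinates. If Na+2b = 0 and Nb+c ≠ 0, then the WDVV equations hold if and only if all commutators [F_i,F_m] vanish, if and only if 1 + (Na/2)² − ac = 0. -/
open Finset

noncomputable def coth (x : ℝ) : ℝ := Real.cosh x / Real.sinh x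

lemma coth_neg (x : ℝ) : coth (-x) = - coth x := by
  simp [coth, Real.cosh_neg, Real.sinh_neg, div_neg]

lemma coth_triple {u v : ℝ} (hu : u ≠ 0) (hv : v ≠ 0) (huv : u + v ≠ 0) :
    coth u * coth v + coth v * coth (-(u+v)) + coth (-(u+v)) * coth u = -1 := by
  have hsu : Real.sinh u ≠ 0 := fun h => hu (Real.sinh_eq_zero.mp h)
  have hsv : Real.sinh v ≠ 0 := fun h => hv (Real.sinh_eq_zero.mp h)
  have hsuv : Real.sinh (u+v) ≠ 0 := fun h => huv (Real.sinh_eq_zero.mp h)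
  unfold coth
  rw [Real.cosh_neg, Real.sinh_neg]
  field_simp
  rw [Real.cosh_add, Real.sinh_add]
  ring

def Fdef (N : ℕ) (a b c : ℝ) (β : Fin N → Fin N → ℝ)
    (F : Fin N → Matrix (Fin N) (Fin N) ℝ) : Prop := ∀ i j k, F i j k =
      a + (if i = j then 1 else 0) * (if j = k then 1 else 0) *
            ((∑ q ∈ univ.erase i, β i q) + 3*b + c)
        + (if i = j then 1 else 0) * (1 - if i = k then 1 else 0) * (β k i + b)
        + (if i = k then 1 else 0) * (1 - if i = j then 1 else 0) * (β j i + b)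
        + (if j = k then 1 else 0) * (1 - if i = j then 1 else 0) * (β i j + b)

variable {N : ℕ} {a b c : ℝ} {β : Fin N → Fin N → ℝ} {F : Fin N → Matrix (Fin N) (Fin N) ℝ}

lemma FE1 (h : Fdef N a b c β F) (x : Fin N) :
    F x x x = a + (∑ q ∈ univ.erase x, β x q) + 3*b + c := by
  rw [h]; simp; ring

lemma FE2 (h : Fdef N a b c β F) {x l : Fin N} (hl : l ≠ x) :
    F x x l = a + b + β l x := by
  rw [h]; simp [Ne.symm hl]; ring

lemma FE3 (h : Fdef N a b c β F) {x l : Fin N} (hl : l ≠ x) :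
    F x l x = a + b + β l x := by
  rw [h]; simp [Ne.symm hl, hl]; ring

lemma FE4 (h : Fdef N a b c β F) {x l : Fin N} (hl : l ≠ x) :
    F x l l = a + b + β x l := by
  rw [h]; simp [Ne.symm hl]; ring

lemma FE5 (h : Fdef N a b c β F) {x j k : Fin N} (hj : j ≠ x) (hk : k ≠ x) (hjk : j ≠ k) :
    F x j k = a := by
  rw [h]; simp [Ne.symm hj, Ne.symm hk, hjk]

lemma beta_anti {A : Fin N → ℝ}
    (hβ : ∀ i j, β i j = if i = j then 0 else coth (A i - A j)) (x y : Fin N) :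
    β x y = - β y x := by
  rcases eq_or_ne x y with rfl | h
  · simp [hβ]
  · rw [hβ, hβ, if_neg h, if_neg (Ne.symm h), show A y - A x = -(A x - A y) by ring, coth_neg, neg_neg]

lemma beta_trip {A : Fin N → ℝ} (hA : Function.Injective A)
    (hβ : ∀ i j, β i j = if i = j then 0 else coth (A i - A j)) {x y z : Fin N}
    (hxy : x ≠ y) (hyz : y ≠ z) (hxz : x ≠ z) :
    β x y * β y z + β y z * β z x + β z x * β x y = -1 := by
  rw [hβ x y, hβ y z, hβ z x, if_neg hxy, if_neg hyz, if_neg (Ne.symm hxz)]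
  have h1 : A x - A y ≠ 0 := sub_ne_zero.2 fun h => hxy (hA h)
  have h2 : A y - A z ≠ 0 := sub_ne_zero.2 fun h => hyz (hA h)
  have h3 : (A x - A y) + (A y - A z) ≠ 0 := by
    rw [show (A x - A y) + (A y - A z) = A x - A z by ring]
    exact sub_ne_zero.2 fun h => hxz (hA h)
  have := coth_triple h1 h2 h3
  rwa [show -((A x - A y) + (A y - A z)) = A z - A x by ring] at this

lemma key {A : Fin N → ℝ} (hA : Function.Injective A)
    (hβ : ∀ i j, β i j = if i = j then 0 else coth (A i - A j))
    (hF : Fdef N a b c β F) {i m : Fin N} (him : i ≠ m) (j k : Fin N) :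
    (F i * F m) j k - (F m * F i) j k =
      ((N:ℝ) - 2 + 2*a*c + 2*b^2 + 2*b*c + 2*(N:ℝ)*a*b + (N:ℝ)*b^2) *
        ((if j = i then (1:ℝ) else 0) * (if k = m then 1 else 0)
          - (if j = m then 1 else 0) * (if k = i then 1 else 0))
      + (-1 + a*c + b^2 + (N:ℝ)*a*b) *
        (((if j = i then (1:ℝ) else 0) - (if j = m then 1 else 0)) *
            (1 - (if k = i then (1:ℝ) else 0) - (if k = m then 1 else 0))
         - ((if k = i then (1:ℝ) else 0) - (if k = m then 1 else 0)) *
            (1 - (if j = i then (1:ℝ) else 0) - (if j = m then 1 else 0))) := by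
  have hmi : m ≠ i := Ne.symm him
  have hβa := beta_anti hβ
  have hN2 : 2 ≤ N := by
    have : Nontrivial (Fin N) := ⟨⟨i, m, him⟩⟩
    exact (by simpa using Fintype.one_lt_card (α := Fin N) : 1 < N)
  have hmem1 : i ∈ (univ : Finset (Fin N)) := mem_univ i
  have hmem2 : m ∈ (univ : Finset (Fin N)).erase i := mem_erase.2 ⟨hmi, mem_univ m⟩
  have hcard2 : ((((univ : Finset (Fin N)).erase i).erase m).card : ℝ) = (N:ℝ) - 2 := by
    rw [card_erase_of_mem hmem2, card_erase_of_mem hmem1, card_univ, Fintype.card_fin]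
    have : (1:ℕ) ≤ N - 1 := by omega
    rw [Nat.cast_sub this, Nat.cast_sub (by omega : 1 ≤ N)]
    push_cast; ring
  have hrevi : ∑ l ∈ (univ : Finset (Fin N)).erase i, β l i
      = -∑ q ∈ univ.erase i, β i q := by
    rw [← Finset.sum_neg_distrib]
    exact sum_congr rfl fun l _ => hβa l i
  have hrevm : ∑ l ∈ (univ : Finset (Fin N)).erase m, β l m
      = -∑ q ∈ univ.erase m, β m q := by
    rw [← Finset.sum_neg_distrib]
    exact sum_congr rfl fun l _ => hβa l m
  have hc3 : ∀ p : Fin N, p ≠ i → p ≠ m →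
      (((((univ : Finset (Fin N)).erase i).erase m).erase p).card : ℝ) = (N:ℝ) - 3 := by
    intro p hpi hpm
    have hp : p ∈ ((univ : Finset (Fin N)).erase i).erase m :=
      mem_erase.2 ⟨hpm, mem_erase.2 ⟨hpi, mem_univ p⟩⟩
    have h3N : 3 ≤ N := by
      have hcard : ({i, m, p} : Finset (Fin N)).card ≤ N := by
        simpa using Finset.card_le_univ ({i, m, p} : Finset (Fin N))
      have hc : ({i, m, p} : Finset (Fin N)).card = 3 := by
        rw [card_insert_of_notMem (by simp [him, Ne.symm hpi]),
          card_insert_of_notMem (by simp [Ne.symm hpm]), card_singleton]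
      omega
    rw [card_erase_of_mem hp, card_erase_of_mem hmem2, card_erase_of_mem hmem1,
      card_univ, Fintype.card_fin]
    have h4 : N - 1 - 1 - 1 = N - 3 := by omega
    rw [h4, Nat.cast_sub h3N]
    norm_num
  have hs3i : ∀ p : Fin N, p ≠ i → p ≠ m →
      ∑ l ∈ ((((univ : Finset (Fin N)).erase i).erase m).erase p), β l i
        = -(∑ q ∈ univ.erase i, β i q) - β m i - β p i := by
    intro p hpi hpm
    rw [Finset.sum_erase_eq_sub (mem_erase.2 ⟨hpm, mem_erase.2 ⟨hpi, mem_univ p⟩⟩),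
      Finset.sum_erase_eq_sub hmem2, hrevi]
  have hswap : ((univ : Finset (Fin N)).erase i).erase m
      = ((univ : Finset (Fin N)).erase m).erase i := Finset.erase_right_comm
  have hs3m : ∀ p : Fin N, p ≠ i → p ≠ m →
      ∑ l ∈ ((((univ : Finset (Fin N)).erase i).erase m).erase p), β l m
        = -(∑ q ∈ univ.erase m, β m q) - β i m - β p m := by
    intro p hpi hpm
    rw [hswap, Finset.sum_erase_eq_sub (mem_erase.2 ⟨hpi,
      mem_erase.2 ⟨hpm, mem_univ p⟩⟩),
      Finset.sum_erase_eq_sub (mem_erase.2 ⟨him, mem_univ i⟩), hrevm]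
  simp only [Matrix.mul_apply, ← Finset.sum_sub_distrib]
  rcases eq_or_ne i j with rfl | hji
  · rcases eq_or_ne i k with rfl | hki
    · -- case C : (i,i)
      trans (0:ℝ)
      · refine Finset.sum_eq_zero fun l _ => ?_
        rcases eq_or_ne i l with rfl | h1
        · ring
        · rcases eq_or_ne m l with rfl | h2
          · rw [FE2 hF hmi, FE2 hF him, FE3 hF him, FE3 hF hmi]; ring
          · rw [FE2 hF (Ne.symm h1), FE5 hF (Ne.symm h2) him (Ne.symm h1),
              FE5 hF him (Ne.symm h2) h1, FE3 hF (Ne.symm h1)]; ring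
      · simp [him, hmi]
    · rcases eq_or_ne m k with rfl | hkm
      · -- case A : (i,m)
        simp only [eq_self_iff_true, if_true, him, hmi, if_false]
        rw [← Finset.add_sum_erase _ _ hmem1, ← Finset.add_sum_erase _ _ hmem2]
        have hcong : ∑ l ∈ ((univ : Finset (Fin N)).erase i).erase m,
            (F i i l * F m l m - F m i l * F i l m)
            = ∑ l ∈ ((univ : Finset (Fin N)).erase i).erase m,
              (((a+b)^2 - a^2 + 1) + (a+b+β i m) * β l i + (a+b-β i m) * β l m) := by
          refine Finset.sum_congr rfl fun l hl => ?_
          have h2 : l ≠ m := (mem_erase.1 hl).1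
          have h1 : l ≠ i := (mem_erase.1 (mem_erase.1 hl).2).1
          rw [FE2 hF h1, FE3 hF h2, FE5 hF him h2 (Ne.symm h1),
            FE5 hF h1 hmi h2]
          have ht := beta_trip hA hβ h1 him h2
          have ha := hβa m l
          linear_combination (-1 : ℝ) * ht + (β i m + β l i) * ha
        rw [hcong, Finset.sum_add_distrib, Finset.sum_add_distrib, Finset.sum_const,
          ← Finset.mul_sum, ← Finset.mul_sum]
        have e1 : ∑ l ∈ ((univ : Finset (Fin N)).erase i).erase m, β l i
            = -(∑ q ∈ univ.erase i, β i q) - β m i := by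
          rw [Finset.sum_erase_eq_sub hmem2, hrevi]
        have e2 : ∑ l ∈ ((univ : Finset (Fin N)).erase i).erase m, β l m
            = -(∑ q ∈ univ.erase m, β m q) - β i m := by
          rw [Finset.erase_right_comm,
            Finset.sum_erase_eq_sub (mem_erase.2 ⟨him, mem_univ i⟩), hrevm]
        rw [e1, e2, nsmul_eq_mul, hcard2,
          FE1 hF i, FE1 hF m, FE2 hF hmi, FE3 hF him, FE4 hF him, FE4 hF hmi,
          hβa m i]
        ring
      · -- case B : (i,p)
        simp only [eq_self_iff_true, if_true, him, hmi, Ne.symm hki, Ne.symm hkm, if_false]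
        have hmem3 : k ∈ ((univ : Finset (Fin N)).erase i).erase m :=
          mem_erase.2 ⟨Ne.symm hkm, mem_erase.2 ⟨Ne.symm hki, mem_univ k⟩⟩
        rw [← Finset.add_sum_erase _ _ hmem1, ← Finset.add_sum_erase _ _ hmem2,
          ← Finset.add_sum_erase _ _ hmem3]
        have hcong : ∑ l ∈ (((univ : Finset (Fin N)).erase i).erase m).erase k,
            (F i i l * F m l k - F m i l * F i l k)
            = ∑ l ∈ (((univ : Finset (Fin N)).erase i).erase m).erase k,
              (a*b + a * β l i) := by
          refine Finset.sum_congr rfl fun l hl => ?_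
          have h3 : l ≠ k := (mem_erase.1 hl).1
          have h2 : l ≠ m := (mem_erase.1 (mem_erase.1 hl).2).1
          have h1 : l ≠ i := (mem_erase.1 (mem_erase.1 (mem_erase.1 hl).2).2).1
          rw [FE2 hF h1, FE5 hF h2 (Ne.symm hkm) h3, FE5 hF him h2 (Ne.symm h1),
            FE5 hF h1 (Ne.symm hki) h3]
          ring
        rw [hcong, Finset.sum_add_distrib, Finset.sum_const, ← Finset.mul_sum,
          hs3i k (Ne.symm hki) (Ne.symm hkm), nsmul_eq_mul, hc3 k (Ne.symm hki) (Ne.symm hkm),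
          FE1 hF i, FE5 hF him (Ne.symm hkm) hki, FE4 hF him, FE2 hF (Ne.symm hki),
          FE2 hF hmi, FE2 hF (Ne.symm hkm), FE3 hF him, FE5 hF hmi (Ne.symm hki) hkm,
          FE4 hF (Ne.symm hkm), FE4 hF (Ne.symm hki),
          hβa m i, hβa k m, hβa i k]
        have ht := beta_trip hA hβ him hkm hki
        linear_combination ht
  · rcases eq_or_ne m j with rfl | hjm
    · rcases eq_or_ne i k with rfl | hki
      · -- case E : (m,i)
        simp only [eq_self_iff_true, if_true, him, hmi, if_false]
        rw [← Finset.add_sum_erase _ _ hmem1, ← Finset.add_sum_erase _ _ hmem2]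
        have hcong : ∑ l ∈ ((univ : Finset (Fin N)).erase i).erase m,
            (F i m l * F m l i - F m m l * F i l i)
            = ∑ l ∈ ((univ : Finset (Fin N)).erase i).erase m,
              (-((a+b)^2 - a^2 + 1) - (a+b+β i m) * β l i - (a+b-β i m) * β l m) := by
          refine Finset.sum_congr rfl fun l hl => ?_
          have h2 : l ≠ m := (mem_erase.1 hl).1
          have h1 : l ≠ i := (mem_erase.1 (mem_erase.1 hl).2).1
          rw [FE5 hF hmi h1 (Ne.symm h2), FE5 hF h2 him h1, FE2 hF h2, FE3 hF h1]
          have ht := beta_trip hA hβ h1 him h2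
          have ha := hβa m l
          linear_combination ht - (β i m + β l i) * ha
        rw [hcong]
        simp only [Finset.sum_add_distrib, Finset.sum_sub_distrib, Finset.sum_const,
          ← Finset.mul_sum]
        have e1 : ∑ l ∈ ((univ : Finset (Fin N)).erase i).erase m, β l i
            = -(∑ q ∈ univ.erase i, β i q) - β m i := by
          rw [Finset.sum_erase_eq_sub hmem2, hrevi]
        have e2 : ∑ l ∈ ((univ : Finset (Fin N)).erase i).erase m, β l m
            = -(∑ q ∈ univ.erase m, β m q) - β i m := by
          rw [Finset.erase_right_comm,
            Finset.sum_erase_eq_sub (mem_erase.2 ⟨him, mem_univ i⟩), hrevm]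
        rw [e1, e2, nsmul_eq_mul, hcard2,
          FE3 hF hmi, FE4 hF him, FE2 hF him, FE1 hF i, FE4 hF hmi, FE1 hF m,
          hβa m i]
        ring
      · rcases eq_or_ne m k with rfl | hkm
        · -- case D : (m,m)
          trans (0:ℝ)
          · refine Finset.sum_eq_zero fun l _ => ?_
            rcases eq_or_ne i l with rfl | h1
            · rw [FE3 hF hmi, FE3 hF him, FE2 hF him, FE2 hF hmi]; ring
            · rcases eq_or_ne m l with rfl | h2
              · ring
              · rw [FE5 hF hmi (Ne.symm h1) h2, FE3 hF (Ne.symm h2),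
                  FE2 hF (Ne.symm h2), FE5 hF (Ne.symm h1) hmi (Ne.symm h2)]; ring
          · simp [him, hmi]
        · -- case F : (m,p)
          simp only [eq_self_iff_true, if_true, him, hmi, Ne.symm hki, Ne.symm hkm, if_false]
          have hmem3 : k ∈ ((univ : Finset (Fin N)).erase i).erase m :=
            mem_erase.2 ⟨Ne.symm hkm, mem_erase.2 ⟨Ne.symm hki, mem_univ k⟩⟩
          rw [← Finset.add_sum_erase _ _ hmem1, ← Finset.add_sum_erase _ _ hmem2,
            ← Finset.add_sum_erase _ _ hmem3]
          have hcong : ∑ l ∈ (((univ : Finset (Fin N)).erase i).erase m).erase k,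
              (F i m l * F m l k - F m m l * F i l k)
              = ∑ l ∈ (((univ : Finset (Fin N)).erase i).erase m).erase k,
                (-(a*b) - a * β l m) := by
            refine Finset.sum_congr rfl fun l hl => ?_
            have h3 : l ≠ k := (mem_erase.1 hl).1
            have h2 : l ≠ m := (mem_erase.1 (mem_erase.1 hl).2).1
            have h1 : l ≠ i := (mem_erase.1 (mem_erase.1 (mem_erase.1 hl).2).2).1
            rw [FE5 hF hmi h1 (Ne.symm h2), FE5 hF h2 (Ne.symm hkm) h3, FE2 hF h2,
              FE5 hF h1 (Ne.symm hki) h3]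
            ring
          rw [hcong]
          simp only [Finset.sum_sub_distrib, Finset.sum_const, ← Finset.mul_sum]
          rw [hs3m k (Ne.symm hki) (Ne.symm hkm), nsmul_eq_mul,
            hc3 k (Ne.symm hki) (Ne.symm hkm),
            FE3 hF hmi, FE5 hF him (Ne.symm hkm) hki, FE2 hF him, FE2 hF (Ne.symm hki),
            FE4 hF hmi, FE2 hF (Ne.symm hkm), FE1 hF m, FE5 hF hmi (Ne.symm hki) hkm,
            FE4 hF (Ne.symm hkm), FE4 hF (Ne.symm hki),
            hβa m i, hβa k m, hβa i k]
          have ht := beta_trip hA hβ him hkm hki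
          linear_combination -ht
    · rcases eq_or_ne i k with rfl | hki
      · -- case G : (p,i)
        simp only [eq_self_iff_true, if_true, him, hmi, Ne.symm hji, Ne.symm hjm, if_false]
        have hmem3 : j ∈ ((univ : Finset (Fin N)).erase i).erase m :=
          mem_erase.2 ⟨Ne.symm hjm, mem_erase.2 ⟨Ne.symm hji, mem_univ j⟩⟩
        rw [← Finset.add_sum_erase _ _ hmem1, ← Finset.add_sum_erase _ _ hmem2,
          ← Finset.add_sum_erase _ _ hmem3]
        have hcong : ∑ l ∈ (((univ : Finset (Fin N)).erase i).erase m).erase j,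
            (F i j l * F m l i - F m j l * F i l i)
            = ∑ l ∈ (((univ : Finset (Fin N)).erase i).erase m).erase j,
              (-(a*b) - a * β l i) := by
          refine Finset.sum_congr rfl fun l hl => ?_
          have h3 : l ≠ j := (mem_erase.1 hl).1
          have h2 : l ≠ m := (mem_erase.1 (mem_erase.1 hl).2).1
          have h1 : l ≠ i := (mem_erase.1 (mem_erase.1 (mem_erase.1 hl).2).2).1
          rw [FE5 hF (Ne.symm hji) h1 (Ne.symm h3), FE5 hF h2 him h1,
            FE5 hF (Ne.symm hjm) h2 (Ne.symm h3), FE3 hF h1]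
          ring
        rw [hcong]
        simp only [Finset.sum_sub_distrib, Finset.sum_const, ← Finset.mul_sum]
        rw [hs3i j (Ne.symm hji) (Ne.symm hjm), nsmul_eq_mul,
          hc3 j (Ne.symm hji) (Ne.symm hjm),
          FE3 hF (Ne.symm hji), FE4 hF him, FE5 hF (Ne.symm hjm) him (Ne.symm hji),
          FE1 hF i, FE5 hF (Ne.symm hji) hmi (Ne.symm hjm), FE2 hF him, FE3 hF (Ne.symm hjm),
          FE3 hF hmi, FE4 hF (Ne.symm hji), FE4 hF (Ne.symm hjm),
          hβa m i, hβa j m, hβa i j]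
        have ht := beta_trip hA hβ him hjm hji
        linear_combination -ht
      · rcases eq_or_ne m k with rfl | hkm
        · -- case H : (p,m)
          simp only [eq_self_iff_true, if_true, him, hmi, Ne.symm hji, Ne.symm hjm, if_false]
          have hmem3 : j ∈ ((univ : Finset (Fin N)).erase i).erase m :=
            mem_erase.2 ⟨Ne.symm hjm, mem_erase.2 ⟨Ne.symm hji, mem_univ j⟩⟩
          rw [← Finset.add_sum_erase _ _ hmem1, ← Finset.add_sum_erase _ _ hmem2,
            ← Finset.add_sum_erase _ _ hmem3]
          have hcong : ∑ l ∈ (((univ : Finset (Fin N)).erase i).erase m).erase j,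
              (F i j l * F m l m - F m j l * F i l m)
              = ∑ l ∈ (((univ : Finset (Fin N)).erase i).erase m).erase j,
                (a*b + a * β l m) := by
            refine Finset.sum_congr rfl fun l hl => ?_
            have h3 : l ≠ j := (mem_erase.1 hl).1
            have h2 : l ≠ m := (mem_erase.1 (mem_erase.1 hl).2).1
            have h1 : l ≠ i := (mem_erase.1 (mem_erase.1 (mem_erase.1 hl).2).2).1
            rw [FE5 hF (Ne.symm hji) h1 (Ne.symm h3), FE3 hF h2,
              FE5 hF (Ne.symm hjm) h2 (Ne.symm h3), FE5 hF h1 hmi h2]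
            ring
          rw [hcong, Finset.sum_add_distrib, Finset.sum_const, ← Finset.mul_sum,
            hs3m j (Ne.symm hji) (Ne.symm hjm), nsmul_eq_mul,
            hc3 j (Ne.symm hji) (Ne.symm hjm),
            FE3 hF (Ne.symm hji), FE3 hF him, FE5 hF (Ne.symm hjm) him (Ne.symm hji),
            FE2 hF hmi, FE5 hF (Ne.symm hji) hmi (Ne.symm hjm), FE1 hF m, FE3 hF (Ne.symm hjm),
            FE4 hF hmi, FE4 hF (Ne.symm hji), FE4 hF (Ne.symm hjm),
            hβa m i, hβa j m, hβa i j]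
          have ht := beta_trip hA hβ him hjm hji
          linear_combination ht
        · rcases eq_or_ne j k with rfl | hjk
          · -- case J : (p,p)
            trans (0:ℝ)
            · refine Finset.sum_eq_zero fun l _ => ?_
              rcases eq_or_ne i l with rfl | h1
              · rw [FE3 hF (Ne.symm hji), FE5 hF him (Ne.symm hjm) hji,
                  FE5 hF (Ne.symm hjm) him (Ne.symm hji), FE2 hF (Ne.symm hji)]
                ring
              · rcases eq_or_ne m l with rfl | h2
                · rw [FE5 hF (Ne.symm hji) hmi (Ne.symm hjm), FE2 hF (Ne.symm hjm),
                    FE3 hF (Ne.symm hjm), FE5 hF hmi (Ne.symm hji) hjm]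
                  ring
                · rcases eq_or_ne j l with rfl | h3
                  · ring
                  · rw [FE5 hF (Ne.symm hji) (Ne.symm h1) h3,
                      FE5 hF (Ne.symm h2) (Ne.symm hjm) (Ne.symm h3),
                      FE5 hF (Ne.symm hjm) (Ne.symm h2) h3,
                      FE5 hF (Ne.symm h1) (Ne.symm hji) (Ne.symm h3)]
                    ring
            · simp [Ne.symm hji, Ne.symm hjm]
          · -- case I : (p,q)
            simp only [eq_self_iff_true, if_true, him, hmi, Ne.symm hji, Ne.symm hjm,
              Ne.symm hki, Ne.symm hkm, if_false]
            have hmem3 : j ∈ ((univ : Finset (Fin N)).erase i).erase m :=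
              mem_erase.2 ⟨Ne.symm hjm, mem_erase.2 ⟨Ne.symm hji, mem_univ j⟩⟩
            have hmem4 : k ∈ (((univ : Finset (Fin N)).erase i).erase m).erase j :=
              mem_erase.2 ⟨Ne.symm hjk, mem_erase.2 ⟨Ne.symm hkm,
                mem_erase.2 ⟨Ne.symm hki, mem_univ k⟩⟩⟩
            rw [← Finset.add_sum_erase _ _ hmem1, ← Finset.add_sum_erase _ _ hmem2,
              ← Finset.add_sum_erase _ _ hmem3, ← Finset.add_sum_erase _ _ hmem4]
            rw [Finset.sum_eq_zero (fun l hl => ?_)]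
            · rw [FE3 hF (Ne.symm hji), FE5 hF him (Ne.symm hkm) hki,
                FE5 hF (Ne.symm hjm) him (Ne.symm hji), FE2 hF (Ne.symm hki),
                FE5 hF (Ne.symm hji) hmi (Ne.symm hjm), FE2 hF (Ne.symm hkm), FE3 hF (Ne.symm hjm),
                FE5 hF hmi (Ne.symm hki) hkm,
                FE4 hF (Ne.symm hji), FE5 hF (Ne.symm hjm) (Ne.symm hkm) hjk,
                FE4 hF (Ne.symm hjm), FE5 hF (Ne.symm hji) (Ne.symm hki) hjk,
                FE4 hF (Ne.symm hkm), FE4 hF (Ne.symm hki),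
                hβa j i, hβa k i, hβa k m, hβa j m]
              ring
            · have h4 : l ≠ k := (mem_erase.1 hl).1
              have h3 : l ≠ j := (mem_erase.1 (mem_erase.1 hl).2).1
              have h2 : l ≠ m := (mem_erase.1 (mem_erase.1 (mem_erase.1 hl).2).2).1
              have h1 : l ≠ i := (mem_erase.1 (mem_erase.1 (mem_erase.1 (mem_erase.1 hl).2).2).2).1
              rw [FE5 hF (Ne.symm hji) h1 (Ne.symm h3), FE5 hF h2 (Ne.symm hkm) h4,
                FE5 hF (Ne.symm hjm) h2 (Ne.symm h3), FE5 hF h1 (Ne.symm hki) h4]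
              ring

theorem wdvv_special (N : ℕ) (hN : 3 ≤ N) (a b c : ℝ) (A : Fin N → ℝ)
    (hA : Function.Injective A)
    (hp : (N : ℝ) * a + 2 * b = 0) (hq : (N : ℝ) * b + c ≠ 0)
    (β : Fin N → Fin N → ℝ)
    (hβ : ∀ i j, β i j = if i = j then 0 else coth (A i - A j))
    (F : Fin N → Matrix (Fin N) (Fin N) ℝ)
    (hF : ∀ i j k, F i j k =
      a + (if i = j then 1 else 0) * (if j = k then 1 else 0) *
            ((∑ q ∈ univ.erase i, β i q) + 3*b + c)
        + (if i = j then 1 else 0) * (1 - if i = k then 1 else 0) * (β k i + b)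
        + (if i = k then 1 else 0) * (1 - if i = j then 1 else 0) * (β j i + b)
        + (if j = k then 1 else 0) * (1 - if i = j then 1 else 0) * (β i j + b))
    (B : Matrix (Fin N) (Fin N) ℝ) (hBdef : B = ∑ j, F j) :
    ((∀ i m, F i * B⁻¹ * F m = F m * B⁻¹ * F i) ↔ (∀ i m, F i * F m = F m * F i)) ∧
    ((∀ i m, F i * F m = F m * F i) ↔ 1 + ((N : ℝ) * a / 2)^2 - a * c = 0) := by
  have hFd : Fdef N a b c β F := hF
  have hβa := beta_anti hβ
  have hrev : ∀ x : Fin N, ∑ l ∈ (univ : Finset (Fin N)).erase x, β l x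
      = -∑ q ∈ univ.erase x, β x q := by
    intro x
    rw [← Finset.sum_neg_distrib]
    exact sum_congr rfl fun l _ => hβa l x
  have hN1 : ((N:ℝ)) ≥ 3 := by exact_mod_cast hN
  -- B is a scalar matrix
  have hone : B = ((N:ℝ)*b + c) • (1 : Matrix (Fin N) (Fin N) ℝ) := by
    ext j k
    rw [hBdef, Matrix.sum_apply]
    rcases eq_or_ne j k with rfl | hjk
    · rw [← Finset.add_sum_erase _ _ (mem_univ j)]
      have hcong : ∑ i ∈ (univ : Finset (Fin N)).erase j, F i j j
          = ∑ i ∈ (univ : Finset (Fin N)).erase j, (a + b + β i j) :=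
        Finset.sum_congr rfl fun i hi => FE4 hFd (Ne.symm (mem_erase.1 hi).1)
      rw [hcong, Finset.sum_add_distrib, Finset.sum_const, FE1 hFd j, hrev j,
        card_erase_of_mem (mem_univ j), card_univ, Fintype.card_fin, nsmul_eq_mul,
        Nat.cast_sub (by omega : 1 ≤ N), Matrix.smul_apply, Matrix.one_apply_eq,
        smul_eq_mul]
      push_cast
      linear_combination hp
    · rw [← Finset.add_sum_erase _ _ (mem_univ j),
        ← Finset.add_sum_erase _ _ (mem_erase.2 ⟨Ne.symm hjk, mem_univ k⟩)]
      have hcong : ∑ i ∈ ((univ : Finset (Fin N)).erase j).erase k, F i j k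
          = ∑ i ∈ ((univ : Finset (Fin N)).erase j).erase k, a := by
        refine Finset.sum_congr rfl fun i hi => ?_
        have h2 : i ≠ k := (mem_erase.1 hi).1
        have h1 : i ≠ j := (mem_erase.1 (mem_erase.1 hi).2).1
        exact FE5 hFd (Ne.symm h1) (Ne.symm h2) hjk
      rw [hcong, Finset.sum_const, FE2 hFd (Ne.symm hjk), FE3 hFd hjk,
        card_erase_of_mem (mem_erase.2 ⟨Ne.symm hjk, mem_univ k⟩),
        card_erase_of_mem (mem_univ j), card_univ, Fintype.card_fin, nsmul_eq_mul,
        Nat.cast_sub (by omega : 1 ≤ N - 1), Nat.cast_sub (by omega : 1 ≤ N),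
        Matrix.smul_apply, Matrix.one_apply_ne hjk, hβa k j, smul_eq_mul]
      push_cast
      linear_combination hp
  have hBinv : B⁻¹ = ((N:ℝ)*b + c)⁻¹ • (1 : Matrix (Fin N) (Fin N) ℝ) := by
    apply Matrix.inv_eq_right_inv
    rw [hone, Matrix.smul_mul, Matrix.mul_smul, one_mul, smul_smul,
      mul_inv_cancel₀ hq, one_smul]
  have hre : ∀ i m : Fin N, F i * B⁻¹ * F m = ((N:ℝ)*b + c)⁻¹ • (F i * F m) := by
    intro i m
    rw [hBinv, Matrix.mul_smul, Matrix.mul_one, Matrix.smul_mul]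
  constructor
  · constructor
    · intro h i m
      have := h i m
      rw [hre, hre] at this
      exact smul_right_injective _ (inv_ne_zero hq) this
    · intro h i m
      rw [hre, hre, h i m]
  · constructor
    · intro h
      have h01 : (⟨0, by omega⟩ : Fin N) ≠ ⟨1, by omega⟩ :=
        Fin.ne_of_val_ne (by norm_num)
      have hc := key hA hβ hFd h01 ⟨0, by omega⟩ ⟨1, by omega⟩
      rw [h ⟨0, by omega⟩ ⟨1, by omega⟩, sub_self] at hc
      simp only [eq_self_iff_true, if_true, h01, Ne.symm h01, if_false] at hc
      have hT : ((N:ℝ) - 2) * (1 + ((N:ℝ)*a/2)^2 - a*c) = 0 := by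
        linear_combination (-1 : ℝ) * hc
          + (((N:ℝ)-2)*(N:ℝ)*a/4 - b - c - (N:ℝ)*b/2) * hp
      rcases mul_eq_zero.1 hT with h' | h'
      · exact absurd h' (ne_of_gt (by linarith))
      · exact h'
    · intro hT i m
      rcases eq_or_ne i m with rfl | him
      · rfl
      · ext j k
        rw [← sub_eq_zero]
        have hc := key hA hβ hFd him j k
        rw [hc]
        have hP1 : ((N:ℝ) - 2 + 2*a*c + 2*b^2 + 2*b*c + 2*(N:ℝ)*a*b + (N:ℝ)*b^2)
            = 0 := by
          linear_combination ((N:ℝ)-2) * hT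
            + (-((N:ℝ)-2)*(N:ℝ)*a/4 + b + c + (N:ℝ)*b/2) * hp
        have hP2 : (-1 + a*c + b^2 + (N:ℝ)*a*b) = 0 := by
          linear_combination (-1 : ℝ) * hT + (((N:ℝ)*a+2*b)/4) * hp
        rw [hP1, hP2]
        ring
end

section
/- For distinct nonzero reals u, v (with u ≠ ±v), let β(u,v) = coth(u−v) + coth(u+v). Then for pairwise distinct a_i, a_j, a_m (all nonzero, no two summing to zero), β(a_j,a_i)β(a_i,a_m) + β(a_i,a_j)β(a_j,a_m) − β(a_j,a_m)β(a_i,a_m) = 0. -/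
noncomputable def betaBCD (u v : ℝ) : ℝ := coth (u - v) + coth (u + v)

theorem partial_fraction_relation {K : Type*} [Field K] {x y z : K}
    (hxy : x ≠ y) (hxz : x ≠ z) (hyz : y ≠ z) (a b : K) :
    b / (y - x) * (a / (x - z)) + a / (x - y) * (b / (y - z))
      - b / (y - z) * (a / (x - z)) = 0 := by
  field_simp [sub_ne_zero.mpr hxy, sub_ne_zero.mpr hxy.symm, sub_ne_zero.mpr hxz,
    sub_ne_zero.mpr hyz]
  ring

namespace Real

theorem cosh_two_mul_sub_cosh_two_mul (u v : ℝ) :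
    cosh (2 * u) - cosh (2 * v) = 2 * (sinh (u - v) * sinh (u + v)) := by
  have hu : cosh (2 * u) = cosh (u - v) * cosh (u + v) + sinh (u - v) * sinh (u + v) := by
    rw [← cosh_add]; ring_nf
  have hv : cosh (2 * v) = cosh (u + v) * cosh (u - v) - sinh (u + v) * sinh (u - v) := by
    rw [← cosh_sub]; ring_nf
  rw [hu, hv]
  ring

theorem cosh_two_mul_ne_cosh_two_mul {u v : ℝ} (h : u ≠ v) (h' : u + v ≠ 0) :
    cosh (2 * u) ≠ cosh (2 * v) := by
  rw [← sub_ne_zero, cosh_two_mul_sub_cosh_two_mul]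
  exact mul_ne_zero two_ne_zero
    (mul_ne_zero (sinh_ne_zero.mpr (sub_ne_zero.mpr h)) (sinh_ne_zero.mpr h'))

end Real

open Real in
theorem betaBCD_eq_div {u v : ℝ} (h : u ≠ v) (h' : u + v ≠ 0) :
    betaBCD u v = 2 * sinh (2 * u) / (cosh (2 * u) - cosh (2 * v)) := by
  have hsub : sinh (u - v) ≠ 0 := sinh_ne_zero.mpr (sub_ne_zero.mpr h)
  have hadd : sinh (u + v) ≠ 0 := sinh_ne_zero.mpr h'
  have hu : sinh (2 * u) = sinh (u - v) * cosh (u + v) + cosh (u - v) * sinh (u + v) := by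
    rw [← sinh_add]; ring_nf
  rw [betaBCD, coth, coth, cosh_two_mul_sub_cosh_two_mul, hu]
  field_simp
  ring

theorem bcd_relation_one_general (ai aj am : ℝ)
    (hij : ai ≠ aj) (him : ai ≠ am) (hjm : aj ≠ am)
    (hij' : ai + aj ≠ 0) (him' : ai + am ≠ 0) (hjm' : aj + am ≠ 0) :
    betaBCD aj ai * betaBCD ai am + betaBCD ai aj * betaBCD aj am
      - betaBCD aj am * betaBCD ai am = 0 := by
  rw [betaBCD_eq_div hij.symm (by rwa [add_comm]), betaBCD_eq_div him him',
    betaBCD_eq_div hij hij', betaBCD_eq_div hjm hjm']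
  exact partial_fraction_relation
    (Real.cosh_two_mul_ne_cosh_two_mul hij hij') (Real.cosh_two_mul_ne_cosh_two_mul him him')
    (Real.cosh_two_mul_ne_cosh_two_mul hjm hjm') _ _

theorem bcd_relation_one (ai aj am : ℝ)
    (hi : ai ≠ 0) (hj : aj ≠ 0) (hm : am ≠ 0)
    (hij : ai ≠ aj) (him : ai ≠ am) (hjm : aj ≠ am)
    (hij' : ai + aj ≠ 0) (him' : ai + am ≠ 0) (hjm' : aj + am ≠ 0) :
    betaBCD aj ai * betaBCD ai am + betaBCD ai aj * betaBCD aj am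
      - betaBCD aj am * betaBCD ai am = 0 :=
  bcd_relation_one_general ai aj am hij him hjm hij' him' hjm'
end

section
/- For distinct nonzero reals a_i, a_k, a_m (no two equal or opposite), let β(u,v) = coth(u−v)+coth(u+v). Then β(a_i,a_k)β(a_i,a_m) + β(a_m,a_k)β(a_m,a_i) + β(a_k,a_m)β(a_k,a_i) = 4. -/
lemma coth_eq (x : ℝ) (hx : x ≠ 0) :
    coth x = (Real.exp x ^ 2 + 1) / (Real.exp x ^ 2 - 1) := by
  have h1 : Real.exp x ≠ 0 := (Real.exp_pos x).ne'
  have h2 : Real.sinh x ≠ 0 := Real.sinh_ne_zero.mpr hx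
  have h3 : Real.exp x ^ 2 - 1 ≠ 0 := by
    intro h
    apply h2
    rw [Real.sinh_eq, Real.exp_neg]
    field_simp
    linarith [sub_eq_zero.mp h]
  rw [coth, Real.cosh_eq, Real.sinh_eq, Real.exp_neg]
  rw [Real.sinh_eq, Real.exp_neg] at h2
  rw [div_eq_div_iff h2 h3]
  field_simp

lemma exp_sq_ne (u v : ℝ) (h1 : u ≠ v) : Real.exp u ^ 2 - Real.exp v ^ 2 ≠ 0 := by
  intro h
  apply h1
  apply Real.exp_injective
  nlinarith [Real.exp_pos u, Real.exp_pos v]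

lemma exp_sq_ne' (u v : ℝ) (h2 : u + v ≠ 0) : Real.exp u ^ 2 * Real.exp v ^ 2 - 1 ≠ 0 := by
  intro h
  apply h2
  have h3 : Real.exp (u + v) ^ 2 = 1 := by
    rw [Real.exp_add]; nlinarith
  have : Real.exp (u + v) = 1 := by nlinarith [Real.exp_pos (u + v)]
  simpa using Real.exp_injective (this.trans Real.exp_zero.symm)

lemma beta_eq (u v : ℝ) (h1 : u ≠ v) (h2 : u + v ≠ 0) :
    betaBCD u v = (Real.exp u ^ 2 + Real.exp v ^ 2) / (Real.exp u ^ 2 - Real.exp v ^ 2)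
      + (Real.exp u ^ 2 * Real.exp v ^ 2 + 1) / (Real.exp u ^ 2 * Real.exp v ^ 2 - 1) := by
  have hv : Real.exp v ≠ 0 := (Real.exp_pos v).ne'
  rw [betaBCD, coth_eq _ (sub_ne_zero.mpr h1), coth_eq _ h2, Real.exp_sub, Real.exp_add,
    div_pow, mul_pow]
  have hne := exp_sq_ne u v h1
  have hne' := exp_sq_ne' u v h2
  field_simp

theorem bcd_relation_two (ai ak am : ℝ)
    (hi : ai ≠ 0) (hk : ak ≠ 0) (hm : am ≠ 0)
    (hik : ai ≠ ak) (him : ai ≠ am) (hkm : ak ≠ am)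
    (hik' : ai + ak ≠ 0) (him' : ai + am ≠ 0) (hkm' : ak + am ≠ 0) :
    betaBCD ai ak * betaBCD ai am + betaBCD am ak * betaBCD am ai
      + betaBCD ak am * betaBCD ak ai = 4 := by
  rw [beta_eq ai ak hik hik', beta_eq ai am him him',
    beta_eq am ak hkm.symm (by rwa [add_comm]), beta_eq am ai him.symm (by rwa [add_comm]),
    beta_eq ak am hkm hkm', beta_eq ak ai hik.symm (by rwa [add_comm])]
  have h1 := exp_sq_ne ai ak hik
  have h2 := exp_sq_ne ai am him
  have h3 := exp_sq_ne ak am hkm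
  have h4 := exp_sq_ne am ak hkm.symm
  have h5 := exp_sq_ne am ai him.symm
  have h6 := exp_sq_ne ak ai hik.symm
  have g1 := exp_sq_ne' ai ak hik'
  have g2 := exp_sq_ne' ai am him'
  have g3 := exp_sq_ne' ak am hkm'
  have g4 := exp_sq_ne' am ak (by rwa [add_comm])
  have g5 := exp_sq_ne' am ai (by rwa [add_comm])
  have g6 := exp_sq_ne' ak ai (by rwa [add_comm])
  field_simp
  ring
end

section
/- For nonzero reals a_i, a_m with a_i ≠ ±a_m, let β(u,v) = coth(u−v)+coth(u+v) and β_k(u) = coth(u). Then β_k(a_i)·β(a_i,a_m) + β_k(a_m)·β(a_m,a_i) = 2. -/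
theorem bcd_relation_three (ai am : ℝ)
    (hi : ai ≠ 0) (hm : am ≠ 0) (him : ai ≠ am) (him' : ai + am ≠ 0) :
    coth ai * betaBCD ai am + coth am * betaBCD am ai = 2 := by
  have h1 : Real.sinh ai ≠ 0 := Real.sinh_ne_zero.2 hi
  have h2 : Real.sinh am ≠ 0 := Real.sinh_ne_zero.2 hm
  have h3 : Real.sinh (ai - am) ≠ 0 := Real.sinh_ne_zero.2 (sub_ne_zero.2 him)
  have h4 : Real.sinh (ai + am) ≠ 0 := Real.sinh_ne_zero.2 him'
  have h5 : Real.sinh (am - ai) ≠ 0 := Real.sinh_ne_zero.2 (sub_ne_zero.2 (Ne.symm him))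
  have h6 : Real.sinh (am + ai) ≠ 0 := by rw [add_comm]; exact h4
  simp only [coth, betaBCD, Real.sinh_sub, Real.cosh_sub, Real.sinh_add, Real.cosh_add] at *
  have h7 : Real.cosh ai * Real.sinh am - Real.sinh ai * Real.cosh am ≠ 0 := by
    rw [mul_comm (Real.cosh ai), mul_comm (Real.sinh ai)]; exact h5
  have h8 : Real.cosh ai * Real.sinh am + Real.sinh ai * Real.cosh am ≠ 0 := by
    rw [mul_comm (Real.cosh ai), mul_comm (Real.sinh ai)]; exact h6
  field_simp
  ring
end

section
/- With the notation of the BCD-type prepotential (N ≥ 3, β_{ij} = coth(a_i−a_j)+coth(a_i+a_j), β_i = η coth(a_i), K_i = Σ_{q≠i}β_{iq}+β_i), for distinct i, m: K_i β_{im} + K_m β_{mi} + Σ_{k≠i,m} β_{km}β_{ki} = β_{im}² + β_{mi}² + 2(2(N−2)+η). -/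
lemma sinh_sq_ne (a b : ℝ) (h1 : a ≠ b) (h2 : a ≠ -b) :
    Real.sinh a ^ 2 ≠ Real.sinh b ^ 2 := by
  intro h
  rcases sq_eq_sq_iff_eq_or_eq_neg.mp h with h' | h'
  · exact h1 (Real.sinh_injective h')
  · rw [← Real.sinh_neg] at h'
    exact h2 (Real.sinh_injective h')

lemma beta_formula (a b : ℝ) (h1 : a ≠ b) (h2 : a ≠ -b) :
    coth (a - b) + coth (a + b) =
      2 * Real.sinh a * Real.cosh a / (Real.sinh a ^ 2 - Real.sinh b ^ 2) := by
  have hd1 : Real.sinh (a - b) ≠ 0 := by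
    rw [Real.sinh_ne_zero]; exact sub_ne_zero.mpr h1
  have hd2 : Real.sinh (a + b) ≠ 0 := by
    rw [Real.sinh_ne_zero]; intro h; exact h2 (by linarith)
  have hd3 : Real.sinh a ^ 2 - Real.sinh b ^ 2 ≠ 0 := sub_ne_zero.mpr (sinh_sq_ne a b h1 h2)
  unfold coth
  rw [Real.sinh_sub, Real.sinh_add, Real.cosh_sub, Real.cosh_add] at *
  rw [div_add_div _ _ hd1 hd2, div_eq_div_iff (mul_ne_zero hd1 hd2) hd3]
  linear_combination (2*Real.sinh a*Real.cosh a*Real.sinh b^2) * Real.cosh_sq_sub_sinh_sq a + (2*Real.sinh a*Real.cosh a*(Real.sinh a^2 - Real.sinh b^2) - 2*Real.cosh a*Real.sinh a^3) * Real.cosh_sq_sub_sinh_sq b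

lemma lemB (a b : ℝ) (ha : a ≠ 0) (hb : b ≠ 0) (h1 : a ≠ b) (h2 : a ≠ -b) :
    coth a * (coth (a - b) + coth (a + b)) + coth b * (coth (b - a) + coth (b + a)) = 2 := by
  have h1' : b ≠ a := h1.symm
  have h2' : b ≠ -a := fun h => h2 (by linarith)
  rw [beta_formula a b h1 h2, beta_formula b a h1' h2']
  have hsa : Real.sinh a ≠ 0 := Real.sinh_ne_zero.mpr ha
  have hsb : Real.sinh b ≠ 0 := Real.sinh_ne_zero.mpr hb
  have hd : Real.sinh a ^ 2 - Real.sinh b ^ 2 ≠ 0 := sub_ne_zero.mpr (sinh_sq_ne a b h1 h2)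
  have hd' : Real.sinh b ^ 2 - Real.sinh a ^ 2 ≠ 0 := fun h => hd (by linarith)
  unfold coth
  field_simp
  linear_combination (Real.sinh b^2 - Real.sinh a^2) * Real.cosh_sq a + (Real.sinh a^2 - Real.sinh b^2) * Real.cosh_sq b

lemma prod_eq (a u v : ℝ) :
    (2*Real.sinh a*Real.cosh a/(Real.sinh a^2 - u)) * (2*Real.sinh a*Real.cosh a/(Real.sinh a^2 - v)) =
      4*Real.sinh a^2*(1+Real.sinh a^2)/((Real.sinh a^2 - u)*(Real.sinh a^2 - v)) := by
  rw [div_mul_div_comm]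
  congr 1
  linear_combination (4*Real.sinh a^2) * Real.cosh_sq a

lemma lagrange (x y z : ℝ) (hxy : x ≠ y) (hxz : x ≠ z) (hyz : y ≠ z) :
    4*x*(1+x)/((x-z)*(x-y)) + 4*y*(1+y)/((y-z)*(y-x)) + 4*z*(1+z)/((z-y)*(z-x)) = 4 := by
  have h1 : x - y ≠ 0 := sub_ne_zero.mpr hxy
  have h2 : x - z ≠ 0 := sub_ne_zero.mpr hxz
  have h3 : y - z ≠ 0 := sub_ne_zero.mpr hyz
  have h1' : y - x ≠ 0 := fun h => h1 (by linarith)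
  have h2' : z - x ≠ 0 := fun h => h2 (by linarith)
  have h3' : z - y ≠ 0 := fun h => h3 (by linarith)
  field_simp
  ring

lemma lemA (a b c : ℝ) (hab1 : a ≠ b) (hab2 : a ≠ -b) (hac1 : a ≠ c) (hac2 : a ≠ -c)
    (hbc1 : b ≠ c) (hbc2 : b ≠ -c) :
    (coth (a-c)+coth (a+c)) * (coth (a-b)+coth (a+b))
    + (coth (b-c)+coth (b+c)) * (coth (b-a)+coth (b+a))
    + (coth (c-b)+coth (c+b)) * (coth (c-a)+coth (c+a)) = 4 := by
  have hba1 : b ≠ a := hab1.symm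
  have hba2 : b ≠ -a := fun h => hab2 (by linarith)
  have hca1 : c ≠ a := hac1.symm
  have hca2 : c ≠ -a := fun h => hac2 (by linarith)
  have hcb1 : c ≠ b := hbc1.symm
  have hcb2 : c ≠ -b := fun h => hbc2 (by linarith)
  rw [beta_formula a c hac1 hac2, beta_formula a b hab1 hab2,
    beta_formula b c hbc1 hbc2, beta_formula b a hba1 hba2,
    beta_formula c b hcb1 hcb2, beta_formula c a hca1 hca2,
    prod_eq, prod_eq, prod_eq]
  exact lagrange _ _ _ (sinh_sq_ne a b hab1 hab2) (sinh_sq_ne a c hac1 hac2)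
    (sinh_sq_ne b c hbc1 hbc2)

open Finset

theorem bcd_key_identity (N : ℕ) (hN : 3 ≤ N) (η : ℝ) (A : Fin N → ℝ)
    (hA0 : ∀ i, A i ≠ 0)
    (hAd : ∀ i j, i ≠ j → A i ≠ A j ∧ A i ≠ -A j)
    (β : Fin N → Fin N → ℝ)
    (hβ : ∀ i j, β i j = if i = j then 0 else coth (A i - A j) + coth (A i + A j))
    (K : Fin N → ℝ)
    (hK : ∀ k, K k = (∑ q ∈ univ.erase k, β k q) + η * coth (A k)) :
    ∀ i m : Fin N, i ≠ m →
      K i * β i m + K m * β m i + (∑ k ∈ univ \ {i, m}, β k m * β k i) =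
        β i m ^ 2 + β m i ^ 2 + 2 * (2 * ((N : ℝ) - 2) + η) := by
  intro i m him
  have hmi : m ≠ i := him.symm
  set S : Finset (Fin N) := univ \ {i, m} with hS
  have hiS : i ∉ S := by simp [hS]
  have hmS : m ∉ S := by simp [hS]
  have hei : univ.erase i = insert m S := by
    ext k
    simp only [mem_erase, mem_univ, and_true, mem_insert, hS, mem_sdiff, mem_singleton,
      not_or]
    constructor
    · intro hk; by_cases h : k = m
      · exact Or.inl h
      · exact Or.inr ⟨trivial, hk, h⟩
    · rintro (rfl | ⟨_, h1, _⟩)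
      · exact hmi
      · exact h1
  have hem : univ.erase m = insert i S := by
    ext k
    simp only [mem_erase, mem_univ, and_true, mem_insert, hS, mem_sdiff, mem_singleton,
      not_or]
    constructor
    · intro hk; by_cases h : k = i
      · exact Or.inl h
      · exact Or.inr ⟨trivial, h, hk⟩
    · rintro (rfl | ⟨_, _, h2⟩)
      · exact him
      · exact h2
  have sumi : ∑ q ∈ univ.erase i, β i q = β i m + ∑ q ∈ S, β i q := by
    rw [hei, Finset.sum_insert hmS]
  have summ : ∑ q ∈ univ.erase m, β m q = β m i + ∑ q ∈ S, β m q := by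
    rw [hem, Finset.sum_insert hiS]
  have hB : coth (A i) * β i m + coth (A m) * β m i = 2 := by
    rw [hβ i m, hβ m i, if_neg him, if_neg hmi]
    exact lemB (A i) (A m) (hA0 i) (hA0 m) (hAd i m him).1 (hAd i m him).2
  have hA4 : ∀ k ∈ S, β i k * β i m + β m k * β m i + β k m * β k i = 4 := by
    intro k hk
    have hk' : k ≠ i ∧ k ≠ m := by
      have := (mem_sdiff.mp hk).2
      simp only [mem_insert, mem_singleton, not_or] at this
      exact this
    have hik : i ≠ k := hk'.1.symm
    have hmk : m ≠ k := hk'.2.symm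
    rw [hβ i k, hβ i m, hβ m k, hβ m i, hβ k m, hβ k i,
      if_neg hik, if_neg him, if_neg hmk, if_neg hmi, if_neg hk'.2, if_neg hk'.1]
    exact lemA (A i) (A m) (A k) (hAd i m him).1 (hAd i m him).2
      (hAd i k hik).1 (hAd i k hik).2 (hAd m k hmk).1 (hAd m k hmk).2
  have hcard : (S.card : ℝ) = (N : ℝ) - 2 := by
    have h2 : ({i, m} : Finset (Fin N)).card = 2 := by
      rw [Finset.card_insert_of_notMem (by simp [him]), Finset.card_singleton]
    have : S.card = N - 2 := by
      rw [hS, Finset.card_sdiff_of_subset (by simp), h2, Finset.card_univ, Fintype.card_fin]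
    rw [this, Nat.cast_sub (by omega)]
    norm_num
  have key : (∑ q ∈ S, β i q) * β i m + (∑ q ∈ S, β m q) * β m i
      + (∑ k ∈ S, β k m * β k i) = 4 * ((N : ℝ) - 2) := by
    rw [Finset.sum_mul, Finset.sum_mul, ← Finset.sum_add_distrib, ← Finset.sum_add_distrib,
      Finset.sum_congr rfl hA4, Finset.sum_const, nsmul_eq_mul, hcard]
    ring
  rw [hK i, hK m, sumi, summ]
  linear_combination key + η * hB
end

section
/- Let N ≥ 3 and a_1,...,a_N nonzero reals with a_i ≠ ±a_j for i≠j. Let F_i be the third-derivative matrices of F = Σ_{i<j}(f(a_i−a_j)+f(a_i+a_j)) + ηΣ_i f(a_i) with f'''(x)=coth(x). If η = −2(N−2), then the matrices F_i pairwise commute: F_iF_m = F_mF_i for all i, m. -/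
open Finset

lemma coth_exp (x : ℝ) (hx : x ≠ 0) :
    coth x = (Real.exp (2*x) + 1) / (Real.exp (2*x) - 1) := by
  have h1 : Real.sinh x ≠ 0 := fun h => hx (Real.sinh_eq_zero.mp h)
  have h2 : Real.exp (2*x) - 1 ≠ 0 := by
    intro h
    have : Real.exp (2*x) = 1 := by linarith
    have := Real.exp_eq_exp.mp (by rw [this, Real.exp_zero] : Real.exp (2*x) = Real.exp 0)
    exact hx (by linarith)
  have he : Real.exp x ≠ 0 := Real.exp_ne_zero x
  have h1' : Real.exp x - Real.exp (-x) ≠ 0 := by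
    intro h
    apply h1
    rw [Real.sinh_eq]
    rw [h]; ring
  rw [coth, Real.cosh_eq, Real.sinh_eq, show (2:ℝ)*x = x + x by ring, Real.exp_add] at *
  rw [Real.exp_neg] at *
  field_simp

lemma coth_sub' (x y : ℝ) (h : x ≠ y) :
    coth (x - y) = (Real.exp (2*x) + Real.exp (2*y)) / (Real.exp (2*x) - Real.exp (2*y)) := by
  have hxy : x - y ≠ 0 := sub_ne_zero.mpr h
  rw [coth_exp _ hxy, show 2*(x-y) = 2*x - 2*y by ring, Real.exp_sub]
  have hQ : Real.exp (2*y) ≠ 0 := Real.exp_ne_zero _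
  have hPQ : Real.exp (2*x) - Real.exp (2*y) ≠ 0 := by
    intro hc
    exact h (by have : (2:ℝ)*x = 2*y := Real.exp_eq_exp.mp (by linarith); linarith)
  have hd : Real.exp (2*x) / Real.exp (2*y) - 1 ≠ 0 := by
    intro hc
    apply hPQ
    field_simp at hc
    linarith
  field_simp

lemma coth_add' (x y : ℝ) (h : x ≠ -y) :
    coth (x + y) = (Real.exp (2*x) * Real.exp (2*y) + 1) / (Real.exp (2*x) * Real.exp (2*y) - 1) := by
  have hxy : x + y ≠ 0 := by intro hc; exact h (by linarith)
  rw [coth_exp _ hxy, show 2*(x+y) = 2*x + 2*y by ring, Real.exp_add]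

lemma key1 (P Q R : ℝ) (h1 : P - Q ≠ 0) (h2 : P*Q - 1 ≠ 0) (h3 : Q - R ≠ 0)
    (h4 : Q*R - 1 ≠ 0) (h5 : P - R ≠ 0) (h6 : P*R - 1 ≠ 0) :
    ((P+Q)/(P-Q)+(P*Q+1)/(P*Q-1)) * ((Q+R)/(Q-R)+(Q*R+1)/(Q*R-1))
      + ((Q+P)/(Q-P)+(Q*P+1)/(Q*P-1)) * ((P+R)/(P-R)+(P*R+1)/(P*R-1))
    = ((P+R)/(P-R)+(P*R+1)/(P*R-1)) * ((Q+R)/(Q-R)+(Q*R+1)/(Q*R-1)) := by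
  have h1' : Q - P ≠ 0 := fun h => h1 (by linarith)
  have h2' : Q*P - 1 ≠ 0 := fun h => h2 (by nlinarith [h])
  field_simp
  ring

lemma key3 (P Q L : ℝ) (hP1 : P - 1 ≠ 0) (hQ1 : Q - 1 ≠ 0) (hPQ : P - Q ≠ 0)
    (hPQ1 : P*Q - 1 ≠ 0) (hPL : P - L ≠ 0) (hPL1 : P*L - 1 ≠ 0)
    (hQL : Q - L ≠ 0) (hQL1 : Q*L - 1 ≠ 0) :
    ((P+L)/(P-L)+(P*L+1)/(P*L-1)) * ((P+Q)/(P-Q)+(P*Q+1)/(P*Q-1))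
      + ((Q+L)/(Q-L)+(Q*L+1)/(Q*L-1)) * ((Q+P)/(Q-P)+(Q*P+1)/(Q*P-1))
      + ((L+P)/(L-P)+(L*P+1)/(L*P-1)) * ((L+Q)/(L-Q)+(L*Q+1)/(L*Q-1))
    = 2*((P+1)/(P-1) * ((P+Q)/(P-Q)+(P*Q+1)/(P*Q-1))
        + (Q+1)/(Q-1) * ((Q+P)/(Q-P)+(Q*P+1)/(Q*P-1))) := by
  have hQP : Q - P ≠ 0 := fun h => hPQ (by linarith)
  have hQP1 : Q*P - 1 ≠ 0 := fun h => hPQ1 (by nlinarith [h])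
  have hLP : L - P ≠ 0 := fun h => hPL (by linarith)
  have hLP1 : L*P - 1 ≠ 0 := fun h => hPL1 (by nlinarith [h])
  have hLQ : L - Q ≠ 0 := fun h => hQL (by linarith)
  have hLQ1 : L*Q - 1 ≠ 0 := fun h => hQL1 (by nlinarith [h])
  field_simp
  ring

theorem bcd_commute (N : ℕ) (hN : 3 ≤ N) (η : ℝ) (hη : η = -2 * ((N : ℝ) - 2))
    (A : Fin N → ℝ)
    (hA0 : ∀ i, A i ≠ 0)
    (hAd : ∀ i j, i ≠ j → A i ≠ A j ∧ A i ≠ -A j)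
    (β : Fin N → Fin N → ℝ)
    (hβ : ∀ i j, β i j = if i = j then 0 else coth (A i - A j) + coth (A i + A j))
    (K : Fin N → ℝ)
    (hK : ∀ k, K k = (∑ q ∈ univ.erase k, β k q) + η * coth (A k))
    (F : Fin N → Matrix (Fin N) (Fin N) ℝ)
    (hF : ∀ i j k, F i j k =
      (if i = j then 1 else 0) * (if j = k then 1 else 0) * K i
        + (if i = j then 1 else 0) * (1 - if i = k then 1 else 0) * β k i
        + (if i = k then 1 else 0) * (1 - if i = j then 1 else 0) * β j i
        + (if j = k then 1 else 0) * (1 - if i = j then 1 else 0) * β i j) :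
    ∀ i m : Fin N, F i * F m = F m * F i := by
  have hβ0 : ∀ p, β p p = 0 := fun p => by simp [hβ]
  have hβ' : ∀ p q, p ≠ q → β p q =
      (Real.exp (2*A p) + Real.exp (2*A q))/(Real.exp (2*A p) - Real.exp (2*A q))
        + (Real.exp (2*A p) * Real.exp (2*A q) + 1)/(Real.exp (2*A p) * Real.exp (2*A q) - 1) := by
    intro p q hpq
    rw [hβ, if_neg hpq, coth_sub' _ _ (hAd p q hpq).1, coth_add' _ _ (hAd p q hpq).2]
  have hcoth : ∀ p, coth (A p) = (Real.exp (2*A p) + 1)/(Real.exp (2*A p) - 1) :=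
    fun p => coth_exp _ (hA0 p)
  have hsubne : ∀ p q, p ≠ q → Real.exp (2*A p) - Real.exp (2*A q) ≠ 0 := by
    intro p q hpq hc
    have h1 : Real.exp (2*A p) = Real.exp (2*A q) := by linarith
    have := Real.exp_eq_exp.mp h1
    exact (hAd p q hpq).1 (by linarith)
  have hmulne : ∀ p q, p ≠ q → Real.exp (2*A p) * Real.exp (2*A q) - 1 ≠ 0 := by
    intro p q hpq hc
    have h1 : Real.exp (2*A p + 2*A q) = Real.exp 0 := by
      rw [Real.exp_add, Real.exp_zero]; linarith
    have := Real.exp_eq_exp.mp h1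
    exact (hAd p q hpq).2 (by linarith)
  have honene : ∀ p, Real.exp (2*A p) - 1 ≠ 0 := by
    intro p hc
    have h1 : Real.exp (2*A p) = Real.exp 0 := by rw [Real.exp_zero]; linarith
    have := Real.exp_eq_exp.mp h1
    exact hA0 p (by linarith)
  have hI : ∀ p q r, p ≠ q → q ≠ r → p ≠ r →
      β p q * β q r + β q p * β p r = β p r * β q r := by
    intro p q r hpq hqr hpr
    rw [hβ' p q hpq, hβ' q r hqr, hβ' q p (Ne.symm hpq), hβ' p r hpr]
    exact key1 _ _ _ (hsubne p q hpq) (hmulne p q hpq) (hsubne q r hqr) (hmulne q r hqr)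
      (hsubne p r hpr) (hmulne p r hpr)
  have hIII : ∀ p q l, p ≠ q → l ≠ p → l ≠ q →
      β p l * β p q + β q l * β q p + β l p * β l q
        = 2*(coth (A p) * β p q + coth (A q) * β q p) := by
    intro p q l hpq hlp hlq
    rw [hβ' p l (Ne.symm hlp), hβ' p q hpq, hβ' q l (Ne.symm hlq), hβ' q p (Ne.symm hpq),
      hβ' l p hlp, hβ' l q hlq, hcoth, hcoth]
    exact key3 _ _ _ (honene p) (honene q) (hsubne p q hpq) (hmulne p q hpq)
      (hsubne p l (Ne.symm hlp)) (hmulne p l (Ne.symm hlp))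
      (hsubne q l (Ne.symm hlq)) (hmulne q l (Ne.symm hlq))
  have hF' : ∀ p j l, F p j l = if p = j then (β l p + if p = l then K p else 0)
      else if p = l then β j p else if j = l then β p j else 0 := by
    intro p j l
    rw [hF]
    by_cases h1 : p = j
    · subst h1
      by_cases h2 : p = l
      · subst h2; simp [hβ0]
      · simp [h2]
    · by_cases h2 : p = l
      · subst h2
        have h3 : ¬ j = p := fun hc => h1 hc.symm
        simp [h1, h3]
      · by_cases h3 : j = l
        · subst h3; simp [h1, h2]
        · simp [h1, h2, h3]
  have Fdiag : ∀ p, F p p p = K p := by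
    intro p; rw [hF']; simp [hβ0]
  have Frow : ∀ p l, p ≠ l → F p p l = β l p := by
    intro p l h; rw [hF']; simp [h]
  have Fcol : ∀ p j, p ≠ j → F p j p = β j p := by
    intro p j h; rw [hF']; simp [h]
  have FdiagOff : ∀ p j, p ≠ j → F p j j = β p j := by
    intro p j h; rw [hF']; simp [h]
  have Fzero : ∀ p j l, p ≠ j → p ≠ l → j ≠ l → F p j l = 0 := by
    intro p j l h1 h2 h3; rw [hF']; simp [h1, h2, h3]
  have sum_row : ∀ p (g : Fin N → ℝ), ∑ l, F p p l * g l = K p * g p + ∑ l, β l p * g l := by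
    intro p g
    have e : ∀ l, F p p l * g l = β l p * g l + (if l = p then K p * g l else 0) := by
      intro l
      rw [hF', if_pos rfl]
      by_cases h : p = l
      · rw [if_pos h, if_pos h.symm]; subst h; ring
      · rw [if_neg h, if_neg (Ne.symm h)]; ring
    rw [Finset.sum_congr rfl (fun l _ => e l), Finset.sum_add_distrib]
    simp [Finset.sum_ite_eq']
    ring
  have sum_off : ∀ p j (g : Fin N → ℝ), p ≠ j →
      ∑ l, F p j l * g l = β j p * g p + β p j * g j := by
    intro p j g h
    have e : ∀ l, F p j l * g l
        = (if l = p then β j p * g p else 0) + (if l = j then β p j * g j else 0) := by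
      intro l
      rw [hF', if_neg h]
      by_cases h1 : p = l
      · subst h1
        simp [h]
      · by_cases h2 : j = l
        · subst h2
          simp [h, Ne.symm h, h1]
        · simp [h1, h2, Ne.symm h1, Ne.symm h2]
    rw [Finset.sum_congr rfl (fun l _ => e l), Finset.sum_add_distrib]
    simp [Finset.sum_ite_eq']
  have T1 : ∀ p q, ∑ l, β l p * F q l q = (∑ l, β l p * β l q) + β q p * K q := by
    intro p q
    have e : ∀ l, β l p * F q l q = β l p * β l q + (if l = q then β l p * K q else 0) := by
      intro l
      rw [hF']
      by_cases h : q = l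
      · subst h
        simp [hβ0]
      · simp [h, Ne.symm h]
    rw [Finset.sum_congr rfl (fun l _ => e l), Finset.sum_add_distrib]
    simp [Finset.sum_ite_eq']
  have T3 : ∀ p q k, q ≠ k → ∑ l, β l p * F q l k = β q p * β k q + β k p * β q k := by
    intro p q k h
    have e : ∀ l, β l p * F q l k
        = (if l = q then β q p * β k q else 0) + (if l = k then β k p * β q k else 0) := by
      intro l
      rw [hF']
      by_cases h1 : q = l
      · subst h1
        simp [h]
      · by_cases h2 : l = k
        · subst h2
          simp [h1, Ne.symm h1]
        · simp [h1, h, h2, Ne.symm h1, Ne.symm h2]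
    rw [Finset.sum_congr rfl (fun l _ => e l), Finset.sum_add_distrib]
    simp [Finset.sum_ite_eq']
  have hII : ∀ p q, p ≠ q →
      K p * β p q + β q p * K q + (∑ l, β l p * β l q) = β p q^2 + β q p^2 := by
    intro p q hpq
    have hKp : K p = (∑ r, β p r) + η * coth (A p) := by
      rw [hK, Finset.sum_erase univ (hβ0 p)]
    have hKq : K q = (∑ r, β q r) + η * coth (A q) := by
      rw [hK, Finset.sum_erase univ (hβ0 q)]
    set g : Fin N → ℝ := fun l => β p l * β p q + β q l * β q p + β l p * β l q with hg
    have hqmem : q ∈ univ.erase p := Finset.mem_erase.mpr ⟨Ne.symm hpq, mem_univ q⟩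
    have hsplit : ∑ l, g l = (∑ l ∈ (univ.erase p).erase q, g l) + g q + g p := by
      rw [← Finset.sum_erase_add univ g (mem_univ p),
        ← Finset.sum_erase_add (univ.erase p) g hqmem]
    have hcard : ((univ.erase p).erase q).card = N - 2 := by
      rw [Finset.card_erase_of_mem hqmem, Finset.card_erase_of_mem (mem_univ p),
        Finset.card_univ, Fintype.card_fin]
      omega
    have hconst : ∑ l ∈ (univ.erase p).erase q, g l
        = ((N : ℝ) - 2) * (2*(coth (A p) * β p q + coth (A q) * β q p)) := by
      rw [Finset.sum_congr rfl (fun l hl => by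
        obtain ⟨hlq, hl'⟩ := Finset.mem_erase.mp hl
        obtain ⟨hlp, _⟩ := Finset.mem_erase.mp hl'
        exact hIII p q l hpq hlp hlq), Finset.sum_const, hcard, nsmul_eq_mul]
      congr 1
      have h2 : (2:ℕ) ≤ N := by omega
      push_cast [Nat.cast_sub h2]
      ring
    have hgq : g q = β p q^2 := by
      simp only [hg, hβ0, mul_zero, zero_mul, add_zero, zero_add]
      ring
    have hgp : g p = β q p^2 := by
      simp only [hg, hβ0, mul_zero, zero_mul, add_zero, zero_add]
      ring
    have hexp : ∑ l, g l = (∑ l, β p l) * β p q + (∑ l, β q l) * β q p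
        + ∑ l, β l p * β l q := by
      simp only [hg, Finset.sum_add_distrib, ← Finset.sum_mul]
    have hE : (∑ l, β p l) * β p q + (∑ l, β q l) * β q p + (∑ l, β l p * β l q)
        = ((N : ℝ) - 2) * (2*(coth (A p) * β p q + coth (A q) * β q p))
          + β p q^2 + β q p^2 := by
      rw [← hexp, hsplit, hconst, hgq, hgp]
    rw [hKp, hKq, hη]
    linear_combination hE
  intro i m
  by_cases him : i = m
  · subst him; rfl
  ext j k
  rw [Matrix.mul_apply, Matrix.mul_apply]
  have hmi : m ≠ i := Ne.symm him
  by_cases hji : j = i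
  · subst hji
    rw [sum_row j (fun l => F m l k), sum_off m j (fun l => F j l k) hmi]
    by_cases hkj : k = j
    · subst hkj
      rw [T3 k m k hmi, FdiagOff m k hmi, Fcol k m him, Fdiag, hβ0]
      ring
    · by_cases hkm : k = m
      · subst hkm
        rw [T1 j k, Fcol k j (Ne.symm him), FdiagOff j k him, Frow j k him]
        linear_combination hII j k him
      · rw [T3 j m k (fun h => hkm h.symm),
          Fzero m j k hmi (fun h => hkm h.symm) (fun h => hkj h.symm),
          Fzero j m k him (fun h => hkj h.symm) (fun h => hkm h.symm),
          Frow j k (fun h => hkj h.symm)]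
        linear_combination hI m k j (fun h => hkm h.symm) hkj hmi
  · by_cases hjm : j = m
    · subst hjm
      rw [sum_off i j (fun l => F j l k) him, sum_row j (fun l => F i l k)]
      by_cases hki : k = i
      · subst hki
        rw [T1 j k, FdiagOff j k (Ne.symm him), Frow j k (Ne.symm him), Fcol k j him]
        linear_combination (-1 : ℝ) * hII j k (Ne.symm him)
      · by_cases hkj : k = j
        · subst hkj
          rw [T3 k i k him, Fcol k i (Ne.symm him), Fdiag, FdiagOff i k him, hβ0]
          ring
        · rw [T3 j i k (fun h => hki h.symm),
            Fzero j i k (Ne.symm him) (fun h => hkj h.symm) (fun h => hki h.symm),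
            Frow j k (fun h => hkj h.symm),
            Fzero i j k him (fun h => hki h.symm) (fun h => hkj h.symm)]
          linear_combination (-1 : ℝ) * hI i k j (fun h => hki h.symm) hkj him
    · rw [sum_off i j (fun l => F m l k) (fun h => hji h.symm),
        sum_off m j (fun l => F i l k) (fun h => hjm h.symm)]
      by_cases hki : k = i
      · subst hki
        rw [FdiagOff m k (Ne.symm him), Fzero m j k (fun h => hjm h.symm) (Ne.symm him) hji,
          Fcol k m him, Fcol k j (fun h => hji h.symm)]
        linear_combination (-1 : ℝ) * hI j m k hjm (Ne.symm him) hji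
      · by_cases hkm : k = m
        · subst hkm
          rw [Fcol k i hki, Fcol k j (fun h => hjm h.symm),
            FdiagOff i k him, Fzero i j k (fun h => hji h.symm) him hjm]
          linear_combination hI i j k (fun h => hji h.symm) hjm him
        · by_cases hkj : k = j
          · subst hkj
            rw [Fzero m i k hmi (fun h => hjm h.symm) (fun h => hji h.symm),
              FdiagOff m k (fun h => hjm h.symm),
              Fzero i m k him (fun h => hji h.symm) (fun h => hjm h.symm),
              FdiagOff i k (fun h => hji h.symm)]
            ring
          · rw [Fzero m i k hmi (fun h => hkm h.symm) (fun h => hki h.symm),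
              Fzero m j k (fun h => hjm h.symm) (fun h => hkm h.symm) (fun h => hkj h.symm),
              Fzero i m k him (fun h => hki h.symm) (fun h => hkm h.symm),
              Fzero i j k (fun h => hji h.symm) (fun h => hki h.symm) (fun h => hkj h.symm)]
            ring
end
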